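/- Let G = (V,E) be a finite simple graph on V = {1,…,n} with n ≥ 1 and let J be any set of subsets of V. Then z^S_J(G) = z^C_J(G). In particular z^S_k(G) = z^C_k(G) for every k ∈ ℕ with k ≤ n, where z^S_k(G) = z^S_{J_k}(G) and z^C_k(G) = z^C_{J_k}(G) for J_k = { I ⊆ V : |I| = k }. -/

import Mathlib

open Matrix

noncomputable section

/-- A stable set vector of a graph `G`: a 0/1 vector with `s i * s j = 0` on edges. -/
def IsStableVec {V : Type*} (G : SimpleGraph V) (s : V → ℝ) : Prop :=
  (∀ i, s i = 0 ∨ s i = 1) ∧ ∀ i j, G.Adj i j → s i * s j = 0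

/-- The squared stable set polytope `STAB²(G) = conv{ s sᵀ : s ∈ S(G) }`. -/
def stab2 {V : Type*} (G : SimpleGraph V) : Set (Matrix V V ℝ) :=
  convexHull ℝ { M | ∃ s, IsStableVec G s ∧ M = Matrix.vecMulVec s s }

/-- The scaled squared stable set polytope
`SSTAB²(G) = conv({ (1/(sᵀs)) s sᵀ : s ∈ S(G), s ≠ 0 } ∪ {0})`. -/
def sstab2 {V : Type*} [Fintype V] (G : SimpleGraph V) : Set (Matrix V V ℝ) :=
  convexHull ℝ
    ({ M | ∃ s, IsStableVec G s ∧ s ≠ 0 ∧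
        M = (∑ k, s k * s k)⁻¹ • Matrix.vecMulVec s s } ∪ {(0 : Matrix V V ℝ)})

/-- The feasible region `TH²(G)` of the SDP (Tn+1): pairs `(x, X)` with `X` symmetric,
`diag X = x`, `X i j = 0` on edges and `X - x xᵀ` positive semidefinite. -/
def th2 {n : ℕ} (G : SimpleGraph (Fin n)) :
    Set ((Fin n → ℝ) × Matrix (Fin n) (Fin n) ℝ) :=
  { p | p.2.IsSymm ∧ (∀ i, p.2 i i = p.1 i) ∧
      (∀ i j, G.Adj i j → p.2 i j = 0) ∧ (p.2 - Matrix.vecMulVec p.1 p.1).PosSemidef }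

/-- The feasible region `CTH²(G)` of the SDP (Tn): symmetric PSD matrices with trace 1
vanishing on edges. -/
def cth2 {n : ℕ} (G : SimpleGraph (Fin n)) : Set (Matrix (Fin n) (Fin n) ℝ) :=
  { X | X.IsSymm ∧ X.trace = 1 ∧ (∀ i j, G.Adj i j → X i j = 0) ∧ X.PosSemidef }

/-- The principal submatrix `X_I` of `X` indexed by `I`. -/
def subMat {n : ℕ} (X : Matrix (Fin n) (Fin n) ℝ) (I : Finset (Fin n)) :
    Matrix (I : Set (Fin n)) (I : Set (Fin n)) ℝ :=
  X.submatrix Subtype.val Subtype.val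

/-- The exact subgraph constraint (ESC) for the subgraph of `G` induced by `I`. -/
def escFeas {n : ℕ} (G : SimpleGraph (Fin n)) (X : Matrix (Fin n) (Fin n) ℝ)
    (I : Finset (Fin n)) : Prop :=
  subMat X I ∈ stab2 (G.induce (I : Set (Fin n)))

/-- The scaled exact subgraph constraint (SESC) for the subgraph of `G` induced by `I`. -/
def sescFeas {n : ℕ} (G : SimpleGraph (Fin n)) (X : Matrix (Fin n) (Fin n) ℝ)
    (I : Finset (Fin n)) : Prop :=
  subMat X I ∈ sstab2 (G.induce (I : Set (Fin n)))

/-- `z^E_J(G)`: optimal value of (Tn+1) with the ESCs for all `I ∈ J`. -/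
def zE {n : ℕ} (G : SimpleGraph (Fin n)) (J : Set (Finset (Fin n))) : ℝ :=
  sSup { r | ∃ x X, (x, X) ∈ th2 G ∧ (∀ I ∈ J, escFeas G X I) ∧ r = ∑ i, x i }

/-- `z^C_J(G)`: optimal value of (Tn) with the ESCs for all `I ∈ J`. -/
def zC {n : ℕ} (G : SimpleGraph (Fin n)) (J : Set (Finset (Fin n))) : ℝ :=
  sSup { r | ∃ X, X ∈ cth2 G ∧ (∀ I ∈ J, escFeas G X I) ∧ r = ∑ i, ∑ j, X i j }

/-- `z^S_J(G)`: optimal value of (Tn) with the SESCs for all `I ∈ J`. -/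
def zS {n : ℕ} (G : SimpleGraph (Fin n)) (J : Set (Finset (Fin n))) : ℝ :=
  sSup { r | ∃ X, X ∈ cth2 G ∧ (∀ I ∈ J, sescFeas G X I) ∧ r = ∑ i, ∑ j, X i j }

/-- The collection `J_k` of all vertex subsets of cardinality `k`. -/
def Jk (n k : ℕ) : Set (Finset (Fin n)) := { I | I.card = k }

/-! Scaling a generator `s sᵀ` of `STAB²` by `1 / (sᵀs) ≤ 1` stays in `STAB²`, since `0 ∈ STAB²`;
hence `SSTAB² ⊆ STAB²`. Conversely, a point `∑ λᵢ sᵢsᵢᵀ` of `STAB²` equals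
`∑ λᵢ (sᵢᵀsᵢ) • (sᵢsᵢᵀ / sᵢᵀsᵢ)`, whose weights add up to its trace. For a principal submatrix
of `X ∈ CTH²` that trace is at most `trace X = 1`, and the remaining weight goes to `0 ∈ SSTAB²`.
So under `X ∈ CTH²` the two kinds of subgraph constraints are equivalent. -/

theorem Convex.sum_smul_mem_of_zero_mem {𝕜 E ι : Type*} [Field 𝕜] [LinearOrder 𝕜]
    [IsStrictOrderedRing 𝕜] [AddCommGroup E] [Module 𝕜 E] {s : Set E} (hs : Convex 𝕜 s)
    (h0 : (0 : E) ∈ s) {t : Finset ι} {w : ι → 𝕜} {z : ι → E} (hw₀ : ∀ i ∈ t, 0 ≤ w i)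
    (hw₁ : ∑ i ∈ t, w i ≤ 1) (hz : ∀ i ∈ t, z i ∈ s) : ∑ i ∈ t, w i • z i ∈ s := by
  rcases (Finset.sum_nonneg hw₀).eq_or_lt with hW | hW
  · have hw : ∀ i ∈ t, w i = 0 := (Finset.sum_eq_zero_iff_of_nonneg hw₀).1 hW.symm
    rwa [Finset.sum_eq_zero fun i hi => by rw [hw i hi, zero_smul]]
  · have hsum : ∑ i ∈ t, w i • z i = (∑ i ∈ t, w i) • t.centerMass w z := by
      rw [Finset.centerMass, smul_smul, mul_inv_cancel₀ hW.ne', one_smul]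
    rw [hsum]
    exact hs.smul_mem_of_zero_mem h0 (hs.centerMass_mem hw₀ hW hz) ⟨hW.le, hw₁⟩

section StableSets

variable {V : Type*} {G : SimpleGraph V}

lemma zero_mem_stab2 : (0 : Matrix V V ℝ) ∈ stab2 G :=
  subset_convexHull ℝ _ ⟨0, ⟨fun _ => Or.inl rfl, fun _ _ _ => mul_zero 0⟩, (vecMulVec_zero 0).symm⟩

variable [Fintype V] {s : V → ℝ}

lemma IsStableVec.one_le_sum_mul_self (hs : IsStableVec G s) (hs0 : s ≠ 0) :
    1 ≤ ∑ k, s k * s k := by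
  obtain ⟨k, hk⟩ := Function.ne_iff.mp hs0
  have hk1 : s k = 1 := (hs.1 k).resolve_left hk
  calc (1 : ℝ) = s k * s k := by rw [hk1, mul_one]
    _ ≤ ∑ k, s k * s k :=
        Finset.single_le_sum (fun i _ => mul_self_nonneg (s i)) (Finset.mem_univ k)

lemma sstab2_subset_stab2 : sstab2 G ⊆ stab2 G := by
  refine convexHull_min ?_ (convex_convexHull ℝ _)
  rintro M (⟨s, hs, hs0, rfl⟩ | rfl)
  · have hs1 := hs.one_le_sum_mul_self hs0
    exact (convex_convexHull ℝ _).smul_mem_of_zero_mem zero_mem_stab2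
      (subset_convexHull ℝ _ ⟨s, hs, rfl⟩)
      ⟨inv_nonneg.2 (zero_le_one.trans hs1), inv_le_one_of_one_le₀ hs1⟩
  · exact zero_mem_stab2

lemma vecMulVec_self_eq_smul_inv_smul (s : V → ℝ) :
    vecMulVec s s = (∑ k, s k * s k) • ((∑ k, s k * s k)⁻¹ • vecMulVec s s) := by
  by_cases hs : s = 0
  · simp [hs]
  · have hss : ∑ k, s k * s k ≠ 0 := fun h => hs (dotProduct_self_eq_zero.1 h)
    rw [smul_smul, mul_inv_cancel₀ hss, one_smul]

lemma IsStableVec.inv_smul_vecMulVec_mem_sstab2 (hs : IsStableVec G s) :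
    (∑ k, s k * s k)⁻¹ • vecMulVec s s ∈ sstab2 G := by
  refine subset_convexHull ℝ _ ?_
  by_cases hs0 : s = 0
  · exact Or.inr (by simp [hs0])
  · exact Or.inl ⟨s, hs, hs0, rfl⟩

lemma mem_sstab2_of_mem_stab2 {Y : Matrix V V ℝ} (hY : Y ∈ stab2 G) (htr : Y.trace ≤ 1) :
    Y ∈ sstab2 G := by
  obtain ⟨ι, _, w, M, hw₀, -, hM, rfl⟩ := mem_convexHull_iff_exists_fintype.1 hY
  choose s hs hMs using hM
  obtain rfl : M = fun i => vecMulVec (s i) (s i) := funext hMs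
  have htr' : ∑ i, w i * ∑ k, s i k * s i k ≤ 1 := by
    simpa [Matrix.trace_sum, dotProduct] using htr
  have hrescale : ∑ i, w i • vecMulVec (s i) (s i) = ∑ i, (w i * ∑ k, s i k * s i k) •
      ((∑ k, s i k * s i k)⁻¹ • vecMulVec (s i) (s i)) :=
    Finset.sum_congr rfl fun i _ => by rw [mul_smul, ← vecMulVec_self_eq_smul_inv_smul]
  rw [hrescale]
  exact (convex_convexHull ℝ _).sum_smul_mem_of_zero_mem (s := sstab2 G)
    (subset_convexHull ℝ _ (Or.inr rfl))
    (fun i _ => mul_nonneg (hw₀ i) (Fintype.sum_nonneg fun k => mul_self_nonneg (s i k)))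
    htr' (fun i _ => (hs i).inv_smul_vecMulVec_mem_sstab2)

end StableSets

lemma trace_subMat_le_one {n : ℕ} {G : SimpleGraph (Fin n)} {X : Matrix (Fin n) (Fin n) ℝ}
    (hX : X ∈ cth2 G) (I : Finset (Fin n)) : (subMat X I).trace ≤ 1 := by
  obtain ⟨-, htr, -, hpsd⟩ := hX
  calc (subMat X I).trace = ∑ i ∈ I, X i i := Finset.sum_finset_coe (fun i => X i i) I
    _ ≤ ∑ i, X i i := Finset.sum_le_sum_of_subset_of_nonneg (Finset.subset_univ I)
          fun i _ _ => hpsd.diag_nonneg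
    _ = 1 := htr

lemma sescFeas_iff_escFeas {n : ℕ} {G : SimpleGraph (Fin n)} {X : Matrix (Fin n) (Fin n) ℝ}
    (hX : X ∈ cth2 G) (I : Finset (Fin n)) : sescFeas G X I ↔ escFeas G X I :=
  ⟨fun h => sstab2_subset_stab2 h,
    fun h => mem_sstab2_of_mem_stab2 h (trace_subMat_le_one hX I)⟩

lemma zS_eq_zC {n : ℕ} (G : SimpleGraph (Fin n)) (J : Set (Finset (Fin n))) :
    zS G J = zC G J := by
  unfold zS zC
  congr 1
  ext r
  refine exists_congr fun X => and_congr_right fun hX => ?_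
  simp only [sescFeas_iff_escFeas hX]

theorem stmt10_general {n : ℕ} (G : SimpleGraph (Fin n))
    (J : Set (Finset (Fin n))) :
    zS G J = zC G J ∧ ∀ k : ℕ, k ≤ n → zS G (Jk n k) = zC G (Jk n k) :=
  ⟨zS_eq_zC G J, fun k _ => zS_eq_zC G (Jk n k)⟩

/-- `z^S_J(G) = z^C_J(G)` for every collection `J` of vertex subsets;
in particular `z^S_k(G) = z^C_k(G)` for every `k ≤ n`. -/
theorem stmt10 {n : ℕ} (hn : 1 ≤ n) (G : SimpleGraph (Fin n))
    (J : Set (Finset (Fin n))) :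
    zS G J = zC G J ∧ ∀ k : ℕ, k ≤ n → zS G (Jk n k) = zC G (Jk n k) :=
  stmt10_general G J
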